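/- Let (M,w) be a pointed Θ-model. Then for every v̄_k ∈ W^un_w, Th_BIL(M, v_k) = Th_BIL(M^un_w, v̄_k), i.e. a BIL(Θ)-formula is true in M at the last element v_k of v̄_k iff it is true in the bi-unravelling M^un_w at v̄_k; consequently, if ū_n, v̄_k ∈ W^un_w have the same last element (u_n = v_k), then Th_BIL(M^un_w, ū_n) = Th_BIL(M^un_w, v̄_k). -/

import Mathlib

/-! Common vocabulary for bi-intuitionistic propositional logic (BIL),
Kripke models, bi-asimulations, abstract bi-intuitionistic logics and
bi-unravellings, following Olkhovikov & Badia,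
"Maximality of bi-intuitionistic propositional logic". -/

/-- Formulas of bi-intuitionistic propositional logic over the type `A` of
propositional letters. -/
inductive BILForm (A : Type) : Type
  | bot : BILForm A
  | atom : A → BILForm A
  | conj : BILForm A → BILForm A → BILForm A
  | disj : BILForm A → BILForm A → BILForm A
  | impl : BILForm A → BILForm A → BILForm A
  | coimpl : BILForm A → BILForm A → BILForm A

namespace BILForm

/-- The propositional letters occurring in a formula; a formula belongs to
`BIL(Θ)` iff its letters are contained in `Θ`. -/
def letters {A : Type} : BILForm A → Set A
  | bot => ∅
  | atom p => {p}
  | conj φ ψ => letters φ ∪ letters ψ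
  | disj φ ψ => letters φ ∪ letters ψ
  | impl φ ψ => letters φ ∪ letters ψ
  | coimpl φ ψ => letters φ ∪ letters ψ

end BILForm

/-- A (bi-intuitionistic) Kripke model with propositional letters `A`,
carried on the subset `dom` of the type `Ω`: a nonempty set of worlds,
partially ordered by `rel`, together with a monotone valuation. -/
structure SKModel (A : Type) (Ω : Type) : Type where
  dom : Set Ω
  nonempty : dom.Nonempty
  rel : Ω → Ω → Prop
  rel_mem : ∀ {u v}, rel u v → u ∈ dom ∧ v ∈ dom
  rel_refl : ∀ u ∈ dom, rel u u
  rel_trans : ∀ {u v w}, rel u v → rel v w → rel u w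
  rel_antisymm : ∀ {u v}, rel u v → rel v u → u = v
  val : A → Set Ω
  val_mem : ∀ p, val p ⊆ dom
  val_mono : ∀ (p : A) {u v}, rel u v → u ∈ val p → v ∈ val p

/-- Kripke satisfaction for bi-intuitionistic formulas. -/
def BILSat {A Ω : Type} (M : SKModel A Ω) : BILForm A → Ω → Prop
  | .bot, _ => False
  | .atom p, w => w ∈ M.val p
  | .conj φ ψ, w => BILSat M φ w ∧ BILSat M ψ w
  | .disj φ ψ, w => BILSat M φ w ∨ BILSat M ψ w
  | .impl φ ψ, w => ∀ v, M.rel w v → BILSat M φ v → BILSat M ψ v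
  | .coimpl φ ψ, w => ∃ v, M.rel v w ∧ BILSat M φ v ∧ ¬ BILSat M ψ v

/-- `(Γ, Δ)` is satisfied at `(M, w)`: all of `Γ` true, all of `Δ` false. -/
def BILSatTh {A Ω : Type} (M : SKModel A Ω) (w : Ω) (Γ Δ : Set (BILForm A)) : Prop :=
  (∀ φ ∈ Γ, BILSat M φ w) ∧ (∀ φ ∈ Δ, ¬ BILSat M φ w)

/-- `Th⁺_BIL(M₁,w₁) ⊆ Th⁺_BIL(M₂,w₂)` over the signature `Θ`. -/
def BILThPosSubset {A Ω₁ Ω₂ : Type} (Θ : Set A) (M₁ : SKModel A Ω₁) (w₁ : Ω₁)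
    (M₂ : SKModel A Ω₂) (w₂ : Ω₂) : Prop :=
  ∀ φ : BILForm A, φ.letters ⊆ Θ → BILSat M₁ φ w₁ → BILSat M₂ φ w₂

/-- `Th_BIL(M₁,w₁) = Th_BIL(M₂,w₂)` over the signature `Θ`. -/
def BILThEq {A Ω₁ Ω₂ : Type} (Θ : Set A) (M₁ : SKModel A Ω₁) (w₁ : Ω₁)
    (M₂ : SKModel A Ω₂) (w₂ : Ω₂) : Prop :=
  ∀ φ : BILForm A, φ.letters ⊆ Θ → (BILSat M₁ φ w₁ ↔ BILSat M₂ φ w₂)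

/-- A bi-asimulation (over the signature `Θ`) from `(M₁,w₁)` to `(M₂,w₂)`,
given by its two components `R ⊆ W₁ × W₂` and `S ⊆ W₂ × W₁`. -/
structure IsBiAsim {A Ω₁ Ω₂ : Type} (Θ : Set A) (M₁ : SKModel A Ω₁) (M₂ : SKModel A Ω₂)
    (w₁ : Ω₁) (w₂ : Ω₂) (R : Ω₁ → Ω₂ → Prop) (S : Ω₂ → Ω₁ → Prop) : Prop where
  memR : ∀ {v s}, R v s → v ∈ M₁.dom ∧ s ∈ M₂.dom
  memS : ∀ {v s}, S v s → v ∈ M₂.dom ∧ s ∈ M₁.dom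
  elem : R w₁ w₂
  atomR : ∀ p ∈ Θ, ∀ {v s}, R v s → v ∈ M₁.val p → s ∈ M₂.val p
  atomS : ∀ p ∈ Θ, ∀ {v s}, S v s → v ∈ M₂.val p → s ∈ M₁.val p
  backR : ∀ {v s t}, R v s → M₂.rel s t → ∃ u, M₁.rel v u ∧ S t u ∧ R u t
  backS : ∀ {v s t}, S v s → M₁.rel s t → ∃ u, M₂.rel v u ∧ R t u ∧ S u t
  forthR : ∀ {v s u}, R v s → M₁.rel u v → ∃ t, M₂.rel t s ∧ S t u ∧ R u t
  forthS : ∀ {v s u}, S v s → M₂.rel u v → ∃ t, M₁.rel t s ∧ R t u ∧ S u t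

/-- `M` is a submodel of `N`. -/
def Submodel {A Ω : Type} (M N : SKModel A Ω) : Prop :=
  M.dom ⊆ N.dom ∧ (∀ u ∈ M.dom, ∀ v ∈ M.dom, (M.rel u v ↔ N.rel u v)) ∧
    ∀ p, M.val p = N.val p ∩ M.dom

/-- `U` is the union of the countable chain `Mc` of models. -/
def IsUnionOfChain {A Ω : Type} (Mc : ℕ → SKModel A Ω) (U : SKModel A Ω) : Prop :=
  U.dom = ⋃ n, (Mc n).dom ∧ (∀ u v, U.rel u v ↔ ∃ n, (Mc n).rel u v) ∧
    ∀ p, U.val p = ⋃ n, (Mc n).val p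

/-- `N'` has the same frame as `N` and the same valuation on the letters in
`Θ` (this expresses both `Σ`-expansions and `Σ`-reducts). -/
def IsExpansion {A Ω : Type} (Θ : Set A) (N N' : SKModel A Ω) : Prop :=
  N'.dom = N.dom ∧ (∀ u v, N'.rel u v ↔ N.rel u v) ∧ ∀ p ∈ Θ, N'.val p = N.val p

/-- `M ≼_BIL N` over the signature `Θ`. -/
def BILElemSub {A Ω : Type} (Θ : Set A) (M N : SKModel A Ω) : Prop :=
  Submodel M N ∧ ∀ w ∈ M.dom, ∀ φ : BILForm A, φ.letters ⊆ Θ →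
    (BILSat M φ w ↔ BILSat N φ w)

/-- `(Γ,Δ)` is a successor BIL-type of `(M,v)` (over the signature `Θ`). -/
def BILSuccType {A Ω : Type} (Θ : Set A) (M : SKModel A Ω) (v : Ω)
    (Γ Δ : Set (BILForm A)) : Prop :=
  (∀ φ ∈ Γ, BILForm.letters φ ⊆ Θ) ∧ (∀ φ ∈ Δ, BILForm.letters φ ⊆ Θ) ∧
    ∀ Γ' ⊆ Γ, ∀ Δ' ⊆ Δ, Γ'.Finite → Δ'.Finite →
      ∃ u, M.rel v u ∧ BILSatTh M u Γ' Δ'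

/-- `(Γ,Δ)` is a predecessor BIL-type of `(M,v)` (over the signature `Θ`). -/
def BILPredType {A Ω : Type} (Θ : Set A) (M : SKModel A Ω) (v : Ω)
    (Γ Δ : Set (BILForm A)) : Prop :=
  (∀ φ ∈ Γ, BILForm.letters φ ⊆ Θ) ∧ (∀ φ ∈ Δ, BILForm.letters φ ⊆ Θ) ∧
    ∀ Γ' ⊆ Γ, ∀ Δ' ⊆ Δ, Γ'.Finite → Δ'.Finite →
      ∃ u, M.rel u v ∧ BILSatTh M u Γ' Δ'

/-- `M` is BIL-saturated (over the signature `Θ`): it realizes all of its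
successor and predecessor BIL-types. -/
def BILSaturated {A Ω : Type} (Θ : Set A) (M : SKModel A Ω) : Prop :=
  ∀ v ∈ M.dom, ∀ Γ Δ : Set (BILForm A),
    (BILSuccType Θ M v Γ Δ → ∃ u, M.rel v u ∧ BILSatTh M u Γ Δ) ∧
    (BILPredType Θ M v Γ Δ → ∃ u, M.rel u v ∧ BILSatTh M u Γ Δ)

/-- An isomorphism `g` of Kripke `Θ`-models from `M` onto `N`. -/
def BILIso {A Ω₁ Ω₂ : Type} (Θ : Set A) (M : SKModel A Ω₁) (N : SKModel A Ω₂)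
    (g : Ω₁ → Ω₂) : Prop :=
  Set.InjOn g M.dom ∧ g '' M.dom = N.dom ∧
  (∀ u ∈ M.dom, ∀ v ∈ M.dom, (M.rel u v ↔ N.rel (g u) (g v))) ∧
  (∀ p ∈ Θ, ∀ u ∈ M.dom, (u ∈ M.val p ↔ g u ∈ N.val p))

/-- An abstract bi-intuitionistic logic over the propositional letters `A`:
a set `In Θ` of `Θ`-formulas for every signature `Θ ⊆ A`, and a satisfaction
relation enjoying the Isomorphism, Expansion, Occurrence and Closure
properties. -/
structure AbsLogic (A : Type) : Type 1 where
  F : Type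
  In : Set A → Set F
  Sat : ∀ {Ω : Type}, SKModel A Ω → Ω → F → Prop
  in_mono : ∀ {Θ Θ' : Set A}, Θ ⊆ Θ' → In Θ ⊆ In Θ'
  iso_invariant : ∀ (Θ : Set A) {Ω₁ Ω₂ : Type} (M : SKModel A Ω₁) (N : SKModel A Ω₂)
      (g : Ω₁ → Ω₂), BILIso Θ M N g →
      ∀ φ ∈ In Θ, ∀ w ∈ M.dom, (Sat M w φ ↔ Sat N (g w) φ)
  expansion : ∀ (Θ : Set A) {Ω : Type} (M M' : SKModel A Ω), M.dom = M'.dom →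
      (∀ u v, M.rel u v ↔ M'.rel u v) → (∀ p ∈ Θ, M.val p = M'.val p) →
      ∀ φ ∈ In Θ, ∀ w, (Sat M w φ ↔ Sat M' w φ)
  occurrence : ∀ (Θ : Set A) (φ : F), φ ∈ In Θ →
      ∃ Θ₀ : Set A, Θ₀.Finite ∧ Θ₀ ⊆ Θ ∧ φ ∈ In Θ₀
  fbot : F
  fconj : F → F → F
  fdisj : F → F → F
  fimpl : F → F → F
  fcoimpl : F → F → F
  mem_bot : ∀ Θ, fbot ∈ In Θ
  mem_conj : ∀ {Θ φ ψ}, φ ∈ In Θ → ψ ∈ In Θ → fconj φ ψ ∈ In Θ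
  mem_disj : ∀ {Θ φ ψ}, φ ∈ In Θ → ψ ∈ In Θ → fdisj φ ψ ∈ In Θ
  mem_impl : ∀ {Θ φ ψ}, φ ∈ In Θ → ψ ∈ In Θ → fimpl φ ψ ∈ In Θ
  mem_coimpl : ∀ {Θ φ ψ}, φ ∈ In Θ → ψ ∈ In Θ → fcoimpl φ ψ ∈ In Θ
  sat_bot : ∀ {Ω : Type} (M : SKModel A Ω) (w : Ω), ¬ Sat M w fbot
  sat_conj : ∀ {Ω : Type} (M : SKModel A Ω) (w : Ω) (φ ψ : F),
      Sat M w (fconj φ ψ) ↔ (Sat M w φ ∧ Sat M w ψ)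
  sat_disj : ∀ {Ω : Type} (M : SKModel A Ω) (w : Ω) (φ ψ : F),
      Sat M w (fdisj φ ψ) ↔ (Sat M w φ ∨ Sat M w ψ)
  sat_impl : ∀ {Ω : Type} (M : SKModel A Ω) (w : Ω) (φ ψ : F),
      Sat M w (fimpl φ ψ) ↔ ∀ v, M.rel w v → Sat M v φ → Sat M v ψ
  sat_coimpl : ∀ {Ω : Type} (M : SKModel A Ω) (w : Ω) (φ ψ : F),
      Sat M w (fcoimpl φ ψ) ↔ ∃ v, M.rel v w ∧ Sat M v φ ∧ ¬ Sat M v ψ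

namespace AbsLogic

variable {A : Type}

/-- The `L`-theory `(Γ,Δ)` is satisfied at `(M,w)`. -/
def SatTh (L : AbsLogic A) {Ω : Type} (M : SKModel A Ω) (w : Ω) (Γ Δ : Set L.F) : Prop :=
  (∀ φ ∈ Γ, L.Sat M w φ) ∧ (∀ φ ∈ Δ, ¬ L.Sat M w φ)

/-- `Th⁺_L(M₁,w₁) ⊆ Th⁺_L(M₂,w₂)` over the signature `Θ`. -/
def ThPosSubset (L : AbsLogic A) (Θ : Set A) {Ω₁ Ω₂ : Type} (M₁ : SKModel A Ω₁) (w₁ : Ω₁)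
    (M₂ : SKModel A Ω₂) (w₂ : Ω₂) : Prop :=
  ∀ φ ∈ L.In Θ, L.Sat M₁ w₁ φ → L.Sat M₂ w₂ φ

/-- `Th_L(M₁,w₁) = Th_L(M₂,w₂)` over the signature `Θ`. -/
def ThEq (L : AbsLogic A) (Θ : Set A) {Ω₁ Ω₂ : Type} (M₁ : SKModel A Ω₁) (w₁ : Ω₁)
    (M₂ : SKModel A Ω₂) (w₂ : Ω₂) : Prop :=
  ∀ φ ∈ L.In Θ, (L.Sat M₁ w₁ φ ↔ L.Sat M₂ w₂ φ)

/-- `L` is preserved under bi-asimulations. -/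
def Preserved (L : AbsLogic A) : Prop :=
  ∀ (Θ : Set A) (Ω₁ Ω₂ : Type) (M₁ : SKModel A Ω₁) (M₂ : SKModel A Ω₂)
    (w₁ : Ω₁) (w₂ : Ω₂) (R : Ω₁ → Ω₂ → Prop) (S : Ω₂ → Ω₁ → Prop),
    IsBiAsim Θ M₁ M₂ w₁ w₂ R S → L.ThPosSubset Θ M₁ w₁ M₂ w₂

/-- `L` is ★-compact. -/
def StarCompact (L : AbsLogic A) : Prop :=
  ∀ (Θ : Set A) (Γ Δ : Set L.F), Γ ⊆ L.In Θ → Δ ⊆ L.In Θ →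
    (∀ Γ' ⊆ Γ, ∀ Δ' ⊆ Δ, Γ'.Finite → Δ'.Finite →
      ∃ (Ω : Type) (M : SKModel A Ω) (w : Ω), w ∈ M.dom ∧ L.SatTh M w Γ' Δ') →
    ∃ (Ω : Type) (M : SKModel A Ω) (w : Ω), w ∈ M.dom ∧ L.SatTh M w Γ Δ

/-- `M ≼_L N` over the signature `Θ`. -/
def ElemSub (L : AbsLogic A) (Θ : Set A) {Ω : Type} (M N : SKModel A Ω) : Prop :=
  Submodel M N ∧ ∀ w ∈ M.dom, ∀ φ ∈ L.In Θ, (L.Sat M w φ ↔ L.Sat N w φ)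

/-- `L` has the Tarski Union Property. -/
def HasTUP (L : AbsLogic A) : Prop :=
  ∀ (Θ : Set A) (Ω : Type) (Mc : ℕ → SKModel A Ω),
    (∀ n, L.ElemSub Θ (Mc n) (Mc (n + 1))) →
    ∀ U : SKModel A Ω, IsUnionOfChain Mc U → ∀ n, L.ElemSub Θ (Mc n) U

/-- `(Γ,Δ)` is a successor `L`-type of `(M,v)` (over the signature `Θ`). -/
def SuccType (L : AbsLogic A) (Θ : Set A) {Ω : Type} (M : SKModel A Ω) (v : Ω)
    (Γ Δ : Set L.F) : Prop :=
  Γ ⊆ L.In Θ ∧ Δ ⊆ L.In Θ ∧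
    ∀ Γ' ⊆ Γ, ∀ Δ' ⊆ Δ, Γ'.Finite → Δ'.Finite →
      ∃ u, M.rel v u ∧ L.SatTh M u Γ' Δ'

/-- `(Γ,Δ)` is a predecessor `L`-type of `(M,v)` (over the signature `Θ`). -/
def PredType (L : AbsLogic A) (Θ : Set A) {Ω : Type} (M : SKModel A Ω) (v : Ω)
    (Γ Δ : Set L.F) : Prop :=
  Γ ⊆ L.In Θ ∧ Δ ⊆ L.In Θ ∧
    ∀ Γ' ⊆ Γ, ∀ Δ' ⊆ Δ, Γ'.Finite → Δ'.Finite →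
      ∃ u, M.rel u v ∧ L.SatTh M u Γ' Δ'

/-- `M` is `L`-saturated (over the signature `Θ`). -/
def Saturated (L : AbsLogic A) (Θ : Set A) {Ω : Type} (M : SKModel A Ω) : Prop :=
  ∀ v ∈ M.dom, ∀ Γ Δ : Set L.F,
    (L.SuccType Θ M v Γ Δ → ∃ u, M.rel v u ∧ L.SatTh M u Γ Δ) ∧
    (L.PredType Θ M v Γ Δ → ∃ u, M.rel u v ∧ L.SatTh M u Γ Δ)

/-- An `L`-elementary embedding of `M` into `N` (over the signature `Θ`). -/
def ElemEmbedding (L : AbsLogic A) (Θ : Set A) {Ω₁ Ω₂ : Type}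
    (M : SKModel A Ω₁) (N : SKModel A Ω₂) (f : Ω₁ → Ω₂) : Prop :=
  Set.InjOn f M.dom ∧ Set.MapsTo f M.dom N.dom ∧
  (∀ u ∈ M.dom, ∀ v ∈ M.dom, (M.rel u v ↔ N.rel (f u) (f v))) ∧
  (∀ u ∈ M.dom, ∀ φ ∈ L.In Θ, (L.Sat M u φ ↔ L.Sat N (f u) φ))

end AbsLogic

/-- An abstract bi-intuitionistic logic extending `BIL`: bi-intuitionistic
formulas are present in it in their usual form and with their usual meaning. -/
structure BILExtension (A : Type) extends AbsLogic A where
  ofBIL : BILForm A → F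
  ofBIL_mem : ∀ (Θ : Set A) (φ : BILForm A), φ.letters ⊆ Θ → ofBIL φ ∈ In Θ
  ofBIL_bot : ofBIL .bot = fbot
  ofBIL_conj : ∀ φ ψ, ofBIL (.conj φ ψ) = fconj (ofBIL φ) (ofBIL ψ)
  ofBIL_disj : ∀ φ ψ, ofBIL (.disj φ ψ) = fdisj (ofBIL φ) (ofBIL ψ)
  ofBIL_impl : ∀ φ ψ, ofBIL (.impl φ ψ) = fimpl (ofBIL φ) (ofBIL ψ)
  ofBIL_coimpl : ∀ φ ψ, ofBIL (.coimpl φ ψ) = fcoimpl (ofBIL φ) (ofBIL ψ)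
  sat_ofBIL : ∀ {Ω : Type} (M : SKModel A Ω) (w : Ω) (φ : BILForm A),
      Sat M w (ofBIL φ) ↔ BILSat M φ w

/-! ### Bi-unravellings -/

/-- The universe `W^un_w` of the bi-unravelling of `M` around `w`: finite
nonempty sequences starting at `w` whose consecutive elements are
`≺`- or `≻`-related and distinct. -/
def unravDom {A Ω : Type} (M : SKModel A Ω) (w : Ω) : Set (List Ω) :=
  {l | l ≠ [] ∧ l.head? = some w ∧ (∀ x ∈ l, x ∈ M.dom) ∧
    l.Chain' (fun u v => (M.rel u v ∨ M.rel v u) ∧ u ≠ v)}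

/-- The one-step relation `ρ^un_w` of the bi-unravelling. -/
def unravStep {A Ω : Type} (M : SKModel A Ω) (w : Ω) (s t : List Ω) : Prop :=
  s ∈ unravDom M w ∧ t ∈ unravDom M w ∧
    ((∃ x y, s.getLast? = some y ∧ t = s ++ [x] ∧ M.rel y x) ∨
     (∃ x y, t.getLast? = some y ∧ s = t ++ [x] ∧ M.rel x y))

/-- The accessibility relation `≺^un_w` of the bi-unravelling: the reflexive
and transitive closure of `ρ^un_w`. -/
def unravRel {A Ω : Type} (M : SKModel A Ω) (w : Ω) : List Ω → List Ω → Prop :=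
  Relation.ReflTransGen (unravStep M w)

/-- The valuation `V^un_w` of the bi-unravelling: a sequence satisfies a
letter iff its last element does. -/
def unravVal {A Ω : Type} (M : SKModel A Ω) (w : Ω) (p : A) : Set (List Ω) :=
  {l | l ∈ unravDom M w ∧ ∃ y, l.getLast? = some y ∧ y ∈ M.val p}

/-- `U` is (a presentation of) the bi-unravelling `M^un_w` of `M` around `w`. -/
def IsUnravelling {A Ω : Type} (M : SKModel A Ω) (w : Ω) (U : SKModel A (List Ω)) : Prop :=
  U.dom = unravDom M w ∧
  (∀ α β, U.rel α β ↔ (α ∈ unravDom M w ∧ β ∈ unravDom M w ∧ unravRel M w α β)) ∧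
  (∀ p, U.val p = unravVal M w p)

/-- `M` is a bi-unravelled model presented in the canonical form: its frame is
literally the bi-unravelling frame of `M₀` around `w₀` (the valuation of `M`
is arbitrary). -/
def IsBiUnravelledForm {A Ω : Type} (M₀ : SKModel A Ω) (w₀ : Ω)
    (M : SKModel A (List Ω)) : Prop :=
  M.dom = unravDom M₀ w₀ ∧
  (∀ α β, M.rel α β ↔ (α ∈ unravDom M₀ w₀ ∧ β ∈ unravDom M₀ w₀ ∧ unravRel M₀ w₀ α β))

/-- `(N,v)` is a bi-unravelled pointed model: its underlying frame is
isomorphic, via a point-preserving order-respecting bijection, to the frame of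
some bi-unravelling. -/
def IsBiUnravelled {A Ω' : Type} (N : SKModel A Ω') (v : Ω') : Prop :=
  ∃ (Ω₀ : Type) (M₀ : SKModel A Ω₀) (w₀ : Ω₀), w₀ ∈ M₀.dom ∧
    ∃ g : Ω' → List Ω₀, Set.InjOn g N.dom ∧ g '' N.dom = unravDom M₀ w₀ ∧ g v = [w₀] ∧
      ∀ x ∈ N.dom, ∀ y ∈ N.dom, (N.rel x y ↔ unravRel M₀ w₀ (g x) (g y))

/-- `qp` and `qm` provide the fresh letters `q⁺_α`, `q⁻_α` (for `α ∈ D`)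
used to form the signature `Θ_M`. -/
def FreshLetters {A Ω : Type} (Θ : Set A) (D : Set Ω) (qp qm : Ω → A) : Prop :=
  Set.InjOn qp D ∧ Set.InjOn qm D ∧
  (∀ α ∈ D, qp α ∉ Θ) ∧ (∀ α ∈ D, qm α ∉ Θ) ∧
  (∀ α ∈ D, ∀ β ∈ D, qp α ≠ qm β)

/-- The signature `Θ_M = Θ ∪ {q⁺_α, q⁻_α : α ∈ D}`. -/
def bracketSig {A Ω : Type} (Θ : Set A) (D : Set Ω) (qp qm : Ω → A) : Set A :=
  Θ ∪ qp '' D ∪ qm '' D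

/-- `Mb` is the model `[M]`: same frame as `M`, same valuation on `Θ`, and
`β ∈ [V](q⁺_α) ↔ α ≺ β`, `β ∉ [V](q⁻_α) ↔ β ≺ α`. -/
def IsBracket {A Ω : Type} (Θ : Set A) (qp qm : Ω → A) (M Mb : SKModel A Ω) : Prop :=
  Mb.dom = M.dom ∧ (∀ u v, Mb.rel u v ↔ M.rel u v) ∧
  (∀ p ∈ Θ, Mb.val p = M.val p) ∧
  (∀ α ∈ M.dom, Mb.val (qp α) = {β | M.rel α β}) ∧
  (∀ α ∈ M.dom, Mb.val (qm α) = {β | β ∈ M.dom ∧ ¬ M.rel β α})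

/-! ### Formula schemas -/

/-- Binary formula schemas: expressions built from two placeholders and
propositional letters by `→` and `≪`. -/
inductive BILSchema (A : Type) : Type
  | v1 : BILSchema A
  | v2 : BILSchema A
  | atom : A → BILSchema A
  | impl : BILSchema A → BILSchema A → BILSchema A
  | coimpl : BILSchema A → BILSchema A → BILSchema A

namespace BILSchema

/-- The letters occurring in a schema. -/
def letters {A : Type} : BILSchema A → Set A
  | v1 => ∅
  | v2 => ∅
  | atom p => {p}
  | impl s t => letters s ∪ letters t
  | coimpl s t => letters s ∪ letters t

/-- Evaluation of a schema in an abstract logic `L` extending `BIL`, on a pair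
of `L`-formulas. -/
def eval {A : Type} (L : BILExtension A) : BILSchema A → L.F → L.F → L.F
  | v1, α, _ => α
  | v2, _, β => β
  | atom p, _, _ => L.ofBIL (.atom p)
  | impl s t, α, β => L.fimpl (eval L s α β) (eval L t α β)
  | coimpl s t, α, β => L.fcoimpl (eval L s α β) (eval L t α β)

end BILSchema

/-- `signSat b P` says that `P` holds if the sign `b` is `+` (`true`), and
that `P` fails if the sign is `−` (`false`). -/
def signSat (b : Bool) (P : Prop) : Prop := if b then P else ¬ P

/-- Iterated conjunction, with `⋀ ∅ := ⊥ → ⊥`. -/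
def bigConj {A : Type} : List (BILForm A) → BILForm A
  | [] => .impl .bot .bot
  | φ :: l => .conj φ (bigConj l)

/-- Iterated disjunction, with `⋁ ∅ := ⊥`. -/
def bigDisj {A : Type} : List (BILForm A) → BILForm A
  | [] => .bot
  | φ :: l => .disj φ (bigDisj l)

/-- `N` realizes (over the signature `Θ`) every BIL-type of its submodel `M`. -/
def BILRealizesTypesIn {A Ω : Type} (Θ : Set A) (M N : SKModel A Ω) : Prop :=
  ∀ v ∈ M.dom, ∀ Γ Δ : Set (BILForm A),
    (BILSuccType Θ M v Γ Δ → ∃ u, N.rel v u ∧ BILSatTh N u Γ Δ) ∧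
    (BILPredType Θ M v Γ Δ → ∃ u, N.rel u v ∧ BILSatTh N u Γ Δ)

/-! The map sending a sequence of `W^un_w` to its last element is a bisimulation for both `≺`
and `≻`: every step of `ρ^un_w` moves the last element along `≺` or `≻`, and every successor or
predecessor of the last element is reached by appending it. Bisimilar points satisfy the same
formulas. -/

structure IsBiBisimulation {A Ω₁ Ω₂ : Type} (M₁ : SKModel A Ω₁) (M₂ : SKModel A Ω₂)
    (Z : Ω₁ → Ω₂ → Prop) : Prop where
  atom : ∀ p {a b}, Z a b → (a ∈ M₁.val p ↔ b ∈ M₂.val p)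
  succ_forth : ∀ {a b a'}, Z a b → M₁.rel a a' → ∃ b', M₂.rel b b' ∧ Z a' b'
  succ_back : ∀ {a b b'}, Z a b → M₂.rel b b' → ∃ a', M₁.rel a a' ∧ Z a' b'
  pred_forth : ∀ {a b a'}, Z a b → M₁.rel a' a → ∃ b', M₂.rel b' b ∧ Z a' b'
  pred_back : ∀ {a b b'}, Z a b → M₂.rel b' b → ∃ a', M₁.rel a' a ∧ Z a' b'

theorem IsBiBisimulation.bilSat_iff {A Ω₁ Ω₂ : Type} {M₁ : SKModel A Ω₁} {M₂ : SKModel A Ω₂}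
    {Z : Ω₁ → Ω₂ → Prop} (hZ : IsBiBisimulation M₁ M₂ Z) (φ : BILForm A) {a : Ω₁} {b : Ω₂}
    (hab : Z a b) : BILSat M₁ φ a ↔ BILSat M₂ φ b := by
  induction φ generalizing a b with
  | bot => exact Iff.rfl
  | atom p => exact hZ.atom p hab
  | conj φ ψ ihφ ihψ => exact and_congr (ihφ hab) (ihψ hab)
  | disj φ ψ ihφ ihψ => exact or_congr (ihφ hab) (ihψ hab)
  | impl φ ψ ihφ ihψ =>
    constructor
    · intro h b' hbb' hφ
      obtain ⟨a', haa', hZ'⟩ := hZ.succ_back hab hbb'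
      exact (ihψ hZ').mp (h a' haa' ((ihφ hZ').mpr hφ))
    · intro h a' haa' hφ
      obtain ⟨b', hbb', hZ'⟩ := hZ.succ_forth hab haa'
      exact (ihψ hZ').mpr (h b' hbb' ((ihφ hZ').mp hφ))
  | coimpl φ ψ ihφ ihψ =>
    constructor
    · rintro ⟨a', ha'a, hφ, hψ⟩
      obtain ⟨b', hb'b, hZ'⟩ := hZ.pred_forth hab ha'a
      exact ⟨b', hb'b, (ihφ hZ').mp hφ, fun h => hψ ((ihψ hZ').mpr h)⟩
    · rintro ⟨b', hb'b, hφ, hψ⟩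
      obtain ⟨a', ha'a, hZ'⟩ := hZ.pred_back hab hb'b
      exact ⟨a', ha'a, (ihφ hZ').mpr hφ, fun h => hψ ((ihψ hZ').mp h)⟩

section Unravelling

variable {A Ω : Type} {M : SKModel A Ω} {w : Ω}

theorem exists_getLast?_of_mem_unravDom {l : List Ω} (hl : l ∈ unravDom M w) :
    ∃ x, l.getLast? = some x :=
  Option.ne_none_iff_exists'.mp (mt List.getLast?_eq_none_iff.mp hl.1)

theorem append_mem_unravDom {l : List Ω} (hl : l ∈ unravDom M w) {x y : Ω}
    (hx : l.getLast? = some x) (hy : y ∈ M.dom) (hxy : M.rel x y ∨ M.rel y x) (hne : x ≠ y) :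
    l ++ [y] ∈ unravDom M w := by
  obtain ⟨hl_ne, hhead, hmem, hchain⟩ := hl
  refine ⟨by simp, by rwa [List.head?_append_of_ne_nil _ hl_ne], ?_, ?_⟩
  · simpa [or_imp, forall_and] using ⟨hmem, hy⟩
  · refine List.isChain_append.mpr ⟨hchain, List.isChain_singleton y, ?_⟩
    rintro a ha b ⟨⟩
    rw [hx, Option.mem_some_iff] at ha
    exact ha ▸ ⟨hxy, hne⟩

theorem unravStep.rel_getLast {s t : List Ω} (hst : unravStep M w s t) {a b : Ω}
    (ha : s.getLast? = some a) (hb : t.getLast? = some b) : M.rel a b := by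
  rcases hst.2.2 with ⟨x, y, hy, rfl, hyx⟩ | ⟨x, y, hy, rfl, hxy⟩
  · rw [List.getLast?_concat, Option.some_inj] at hb
    rw [hy, Option.some_inj] at ha
    exact ha ▸ hb ▸ hyx
  · rw [List.getLast?_concat, Option.some_inj] at ha
    rw [hy, Option.some_inj] at hb
    exact ha ▸ hb ▸ hxy

theorem unravRel.rel_getLast {s t : List Ω} (hst : unravRel M w s t) (hs : s ∈ unravDom M w)
    {a b : Ω} (ha : s.getLast? = some a) (hb : t.getLast? = some b) : M.rel a b := by
  induction hst generalizing b with
  | refl =>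
    rw [ha, Option.some_inj] at hb
    exact hb ▸ M.rel_refl a (hs.2.2.1 a (List.mem_of_mem_getLast? ha))
  | tail _ hstep ih =>
    obtain ⟨c, hc⟩ := exists_getLast?_of_mem_unravDom hstep.1
    exact M.rel_trans (ih hc) (hstep.rel_getLast hc hb)

def unravLast (M : SKModel A Ω) (w : Ω) (x : Ω) (l : List Ω) : Prop :=
  l ∈ unravDom M w ∧ l.getLast? = some x

theorem unravLast.exists_succ {l : List Ω} {x y : Ω} (hl : unravLast M w x l) (hxy : M.rel x y) :
    ∃ l', unravRel M w l l' ∧ unravLast M w y l' := by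
  by_cases heq : x = y
  · exact ⟨l, .refl, heq ▸ hl⟩
  have hmem := append_mem_unravDom hl.1 hl.2 (M.rel_mem hxy).2 (.inl hxy) heq
  exact ⟨l ++ [y], .single ⟨hl.1, hmem, .inl ⟨y, x, hl.2, rfl, hxy⟩⟩,
    hmem, List.getLast?_concat⟩

theorem unravLast.exists_pred {l : List Ω} {x y : Ω} (hl : unravLast M w x l) (hyx : M.rel y x) :
    ∃ l', unravRel M w l' l ∧ unravLast M w y l' := by
  by_cases heq : x = y
  · exact ⟨l, .refl, heq ▸ hl⟩
  have hmem := append_mem_unravDom hl.1 hl.2 (M.rel_mem hyx).1 (.inr hyx) heq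
  exact ⟨l ++ [y], .single ⟨hmem, hl.1, .inr ⟨y, x, hl.2, rfl, hyx⟩⟩,
    hmem, List.getLast?_concat⟩

theorem IsUnravelling.isBiBisimulation_unravLast {U : SKModel A (List Ω)}
    (hU : IsUnravelling M w U) : IsBiBisimulation M U (unravLast M w) := by
  obtain ⟨-, hUrel, hUval⟩ := hU
  refine ⟨fun p x l hxl => ?_, fun hxl hxy => ?_, fun hxl hll' => ?_, fun hxl hyx => ?_,
    fun hxl hl'l => ?_⟩
  · rw [hUval p]
    exact ⟨fun hx => ⟨hxl.1, x, hxl.2, hx⟩,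
      fun ⟨_, y, hy, hyp⟩ => Option.some_inj.mp (hxl.2.symm.trans hy) ▸ hyp⟩
  · obtain ⟨l', hll', hyl'⟩ := hxl.exists_succ hxy
    exact ⟨l', (hUrel _ _).mpr ⟨hxl.1, hyl'.1, hll'⟩, hyl'⟩
  · obtain ⟨-, hl', hrel⟩ := (hUrel _ _).mp hll'
    obtain ⟨y, hy⟩ := exists_getLast?_of_mem_unravDom hl'
    exact ⟨y, hrel.rel_getLast hxl.1 hxl.2 hy, hl', hy⟩
  · obtain ⟨l', hl'l, hyl'⟩ := hxl.exists_pred hyx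
    exact ⟨l', (hUrel _ _).mpr ⟨hyl'.1, hxl.1, hl'l⟩, hyl'⟩
  · obtain ⟨hl', -, hrel⟩ := (hUrel _ _).mp hl'l
    obtain ⟨y, hy⟩ := exists_getLast?_of_mem_unravDom hl'
    exact ⟨y, hrel.rel_getLast hl' hy hxl.2, hl', hy⟩

end Unravelling

theorem bil_unravelling_theories_general (A : Type) (Ω : Type)
    (M : SKModel A Ω) (w : Ω)
    (U : SKModel A (List Ω)) (hU : IsUnravelling M w U) :
    (∀ vb ∈ unravDom M w, ∀ x : Ω, vb.getLast? = some x →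
      ∀ φ : BILForm A, (BILSat M φ x ↔ BILSat U φ vb)) ∧
    (∀ ub ∈ unravDom M w, ∀ vb ∈ unravDom M w, ub.getLast? = vb.getLast? →
      ∀ φ : BILForm A, (BILSat U φ ub ↔ BILSat U φ vb)) := by
  have hZ := hU.isBiBisimulation_unravLast
  refine ⟨fun vb hvb x hx φ => hZ.bilSat_iff φ ⟨hvb, hx⟩, fun ub hub vb hvb hlast φ => ?_⟩
  obtain ⟨x, hx⟩ := exists_getLast?_of_mem_unravDom hub
  exact (hZ.bilSat_iff φ ⟨hub, hx⟩).symm.trans (hZ.bilSat_iff φ ⟨hvb, hlast ▸ hx⟩)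

/-- Lemma 3.6(2,3). Let `(M,w)` be a pointed `Θ`-model and
let `U` be its bi-unravelling `M^un_w`. A bi-intuitionistic formula is true
in `M` at the last element of a sequence `v̄ ∈ W^un_w` iff it is true in
`M^un_w` at `v̄`; consequently any two sequences of `W^un_w` with the same
last element have the same BIL-theory in `M^un_w`. -/
theorem bil_unravelling_theories (A : Type) (Ω : Type)
    (M : SKModel A Ω) (w : Ω) (hw : w ∈ M.dom)
    (U : SKModel A (List Ω)) (hU : IsUnravelling M w U) :
    (∀ vb ∈ unravDom M w, ∀ x : Ω, vb.getLast? = some x →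
      ∀ φ : BILForm A, (BILSat M φ x ↔ BILSat U φ vb)) ∧
    (∀ ub ∈ unravDom M w, ∀ vb ∈ unravDom M w, ub.getLast? = vb.getLast? →
      ∀ φ : BILForm A, (BILSat U φ ub ↔ BILSat U φ vb)) :=
  bil_unravelling_theories_general A Ω M w U hU
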